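/- Let $y_1,y_2$ be vectors in Minkowski space with $y_1^2\neq 0$. Then $\det_{y_1,y_2}=y_1^2y_2^2-(y_1y_2)^2=0$ if and only if there exist $\alpha\in\mathbb{R}$ and a lightlike vector $\ell$ with $(\ell y_1)=0$ such that $y_2=\alpha y_1+\ell$. -/

import Mathlib

/-- Minkowski inner product on `ℝ^{1,3}` with signature `(+,-,-,-)`. -/
noncomputable def mink (x y : Fin 4 → ℝ) : ℝ :=
  x 0 * y 0 - x 1 * y 1 - x 2 * y 2 - x 3 * y 3

/-- `2×2` Gram determinant `det_{a,b} = a²b² − (ab)²`. -/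
noncomputable def gram2 (a b : Fin 4 → ℝ) : ℝ := mink a a * mink b b - (mink a b) ^ 2

/-- `3×3` Gram determinant of the Minkowski inner products. -/
noncomputable def gram3 (y1 y2 y3 : Fin 4 → ℝ) : ℝ :=
  mink y1 y1 * mink y2 y2 * mink y3 y3
    - mink y1 y1 * (mink y2 y3) ^ 2 - mink y2 y2 * (mink y1 y3) ^ 2
    - mink y3 y3 * (mink y1 y2) ^ 2
    + 2 * mink y1 y2 * mink y1 y3 * mink y2 y3

/-- Cofactor `Λ_k` of `(y_i y_j)`: `Λ_k = (y_i y_k)(y_j y_k) − y_k²(y_i y_j)`. -/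
noncomputable def Lam (yi yj yk : Fin 4 → ℝ) : ℝ :=
  mink yi yk * mink yj yk - mink yk yk * mink yi yj

/-! With `α = (y₁y₂)/y₁²` the vector `ℓ = y₂ − α y₁` is orthogonal to `y₁`. The Gram determinant
is unchanged by the shear `y₂ ↦ y₂ − α y₁`, and for orthogonal vectors it is `y₁² ℓ²`; since
`y₁² ≠ 0`, `det_{y₁,y₂}` vanishes exactly when `ℓ` is lightlike. -/

section Mink

variable (x y z : Fin 4 → ℝ) (c : ℝ)

lemma mink_comm : mink x y = mink y x := by
  simp only [mink]; ring

lemma mink_add_left : mink (x + y) z = mink x z + mink y z := by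
  simp only [mink, Pi.add_apply]; ring

lemma mink_add_right : mink x (y + z) = mink x y + mink x z := by
  simp only [mink, Pi.add_apply]; ring

lemma mink_smul_left : mink (c • x) y = c * mink x y := by
  simp only [mink, Pi.smul_apply, smul_eq_mul]; ring

lemma mink_smul_right : mink x (c • y) = c * mink x y := by
  simp only [mink, Pi.smul_apply, smul_eq_mul]; ring

end Mink

lemma gram2_smul_add_right (a b : Fin 4 → ℝ) (c : ℝ) : gram2 a (c • a + b) = gram2 a b := by
  simp only [gram2, mink_add_left, mink_add_right, mink_smul_left, mink_smul_right,
    mink_comm b a]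
  ring

lemma gram2_of_mink_eq_zero {a b : Fin 4 → ℝ} (h : mink b a = 0) :
    gram2 a b = mink a a * mink b b := by
  rw [gram2, mink_comm a b, h]; ring

lemma mink_sub_proj_eq_zero {a : Fin 4 → ℝ} (ha : mink a a ≠ 0) (b : Fin 4 → ℝ) :
    mink (b - (mink a b / mink a a) • a) a = 0 := by
  rw [sub_eq_add_neg, ← neg_smul, mink_add_left, mink_smul_left, mink_comm b a]
  field_simp
  ring

/-- If `y1² ≠ 0`, then `det_{y1,y2} = 0` iff `y2 = α y1 + ℓ` for some real `α`
and a lightlike `ℓ` orthogonal to `y1`. -/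
theorem gram2_eq_zero_iff (y1 y2 : Fin 4 → ℝ) (h : mink y1 y1 ≠ 0) :
    gram2 y1 y2 = 0 ↔
      ∃ (α : ℝ) (ℓ : Fin 4 → ℝ), mink ℓ ℓ = 0 ∧ mink ℓ y1 = 0 ∧ y2 = α • y1 + ℓ := by
  constructor
  · intro hg
    set α := mink y1 y2 / mink y1 y1
    have hy2 : y2 = α • y1 + (y2 - α • y1) := (add_sub_cancel _ _).symm
    have horth : mink (y2 - α • y1) y1 = 0 := mink_sub_proj_eq_zero h y2
    refine ⟨α, y2 - α • y1, ?_, horth, hy2⟩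
    rw [hy2, gram2_smul_add_right, gram2_of_mink_eq_zero horth] at hg
    exact (mul_eq_zero.mp hg).resolve_left h
  · rintro ⟨α, ℓ, hll, hl1, rfl⟩
    rw [gram2_smul_add_right, gram2_of_mink_eq_zero hl1, hll, mul_zero]
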